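/- Let H ∈ (1/2,1), m, m' > 0, and for t, s ≥ 0 let X_t^m = ∫₀^t e^{-m(t-u)} dB_u^H. Then there is a constant c = c(H,m,m') such that 0 ≤ E[X_t^m X_s^{m'}] ≤ c |t-s|^{2H-2} for all t ≠ s ≥ 1 with |t - s| ≥ 1. -/

import Mathlib

/-!
Write `r = 2H - 2 ∈ (-1, 0)`, `δ = |t - s| / 2` and `μ = min m m'`, and split the kernel
`|u - v|^r` according to whether `|u - v| < δ`. Where `|u - v| ≥ δ` the kernel is at most `δ^r`
and the two exponentials integrate to at most `1 / (m m')`. Where `|u - v| < δ` we have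
`(t - u) + (s - v) ≥ |t - s| - |u - v| ≥ δ`, so the exponentials carry an extra factor
`e^{-μδ/2}`; it beats the mass `2δ^{r+1} / (r + 1)` of the singularity because
`δ e^{-μδ/2} ≤ 2 / μ`. Both contributions are `O(δ^r) = O(|t - s|^r)`.
-/

open Real intervalIntegral

/-- `crossCov H m m' t s` is `E[X_t^m X_s^{m'}]` for
`X_t^m = ∫₀^t e^{-m(t-u)} dB^H_u`, expressed through the fBm covariance kernel. -/
noncomputable def crossCov (H m m' t s : ℝ) : ℝ :=
  H * (2*H - 1) * ∫ u in (0:ℝ)..t, ∫ v in (0:ℝ)..s,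
    Real.exp (-m*(t - u)) * Real.exp (-m'*(s - v)) * |u - v| ^ (2*H - 2)

open MeasureTheory Set

theorem intervalIntegral_mono_of_nonneg {f g : ℝ → ℝ} {a b : ℝ} (hab : a ≤ b)
    (hf : ∀ x ∈ Ioc a b, 0 ≤ f x) (hfg : ∀ x ∈ Ioc a b, f x ≤ g x)
    (hg : IntervalIntegrable g volume a b) :
    ∫ x in a..b, f x ≤ ∫ x in a..b, g x := by
  rw [integral_of_le hab, integral_of_le hab]
  exact integral_mono_of_nonneg ((ae_restrict_mem measurableSet_Ioc).mono hf)
    ((intervalIntegrable_iff_integrableOn_Ioc_of_le hab).mp hg)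
    ((ae_restrict_mem measurableSet_Ioc).mono hfg)

theorem integral_exp_neg_mul_sub_le {k t : ℝ} (hk : 0 < k) (ht : 0 ≤ t) :
    ∫ u in (0:ℝ)..t, exp (-k * (t - u)) ≤ 1 / k := by
  have h := intervalIntegral_pow_mul_exp_neg_le (k := 0) ht hk
  rw [integral_comp_sub_left (fun x => exp (-k * x)) t]
  simpa using h

theorem integral_indicator_abs_rpow {r δ : ℝ} (hr : -1 < r) (hδ : 0 ≤ δ) :
    ∫ x, (Iio δ).indicator (· ^ r) |x| = 2 * (δ ^ (r + 1) / (r + 1)) := by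
  rw [integral_comp_abs (f := (Iio δ).indicator (· ^ r)), setIntegral_indicator measurableSet_Iio,
    Ioi_inter_Iio, ← integral_Ioc_eq_integral_Ioo, ← integral_of_le hδ, integral_rpow (Or.inl hr),
    zero_rpow (by linarith), sub_zero]

theorem integrable_indicator_abs_rpow {r δ : ℝ} (hr : -1 < r) (hδ : 0 < δ) :
    Integrable fun x => (Iio δ).indicator (· ^ r) |x| :=
  .of_integral_ne_zero <| by
    rw [integral_indicator_abs_rpow hr hδ.le]
    have : 0 < r + 1 := by linarith
    positivity

theorem exp_mul_exp_le_of_le_add {a b μ m m' δ : ℝ} (ha : 0 ≤ a) (hb : 0 ≤ b) (hμ : 0 ≤ μ)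
    (hμm : μ ≤ m) (hμm' : μ ≤ m') (hδ : δ ≤ a + b) :
    exp (-m * a) * exp (-m' * b) ≤ exp (-(μ * δ / 2)) * exp (-(μ / 2) * a) := by
  rw [← exp_add, ← exp_add, exp_le_exp]
  nlinarith [mul_le_mul_of_nonneg_right hμm ha, mul_le_mul_of_nonneg_right hμm' hb,
    mul_le_mul_of_nonneg_left hδ hμ, mul_nonneg hμ hb]

theorem div_two_rpow_le {x r : ℝ} (hx : 0 ≤ x) (hr : -1 ≤ r) : (x / 2) ^ r ≤ 2 * x ^ r := by
  have h2 : (2:ℝ)⁻¹ ≤ 2 ^ r := by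
    simpa [rpow_neg_one] using rpow_le_rpow_of_exponent_le (by norm_num : (1:ℝ) ≤ 2) hr
  rw [div_rpow hx zero_le_two, div_le_iff₀ (by positivity)]
  nlinarith [rpow_nonneg hx r, mul_le_mul_of_nonneg_left h2 (rpow_nonneg hx r)]

theorem indicator_abs_rpow_nonneg (δ r x : ℝ) : 0 ≤ (Iio δ).indicator (· ^ r) |x| :=
  indicator_apply_nonneg fun _ => rpow_nonneg (abs_nonneg x) r

section ExpKernel

variable {r m m' μ δ t s : ℝ}

theorem exp_mul_exp_mul_abs_rpow_le {u v : ℝ} (hr : r ≤ 0) (hδ : 0 < δ)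
    (hμ : 0 ≤ μ) (hμm : μ ≤ m) (hμm' : μ ≤ m') (hts : 2 * δ ≤ |t - s|) (hu : u ≤ t) (hv : v ≤ s) :
    exp (-m * (t - u)) * exp (-m' * (s - v)) * |u - v| ^ r ≤
      δ ^ r * exp (-m * (t - u)) * exp (-m' * (s - v)) +
        exp (-(μ * δ / 2)) * exp (-(μ / 2) * (t - u)) * (Iio δ).indicator (· ^ r) |u - v| := by
  by_cases hnear : |u - v| < δ
  · have hsum : δ ≤ (t - u) + (s - v) := by
      have : |t - s| ≤ (t - u) + (s - v) + |u - v| :=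
        abs_le.mpr ⟨by linarith [neg_abs_le (u - v)], by linarith [le_abs_self (u - v)]⟩
      linarith
    rw [indicator_of_mem (mem_Iio.mpr hnear)]
    have := exp_mul_exp_le_of_le_add (sub_nonneg.mpr hu) (sub_nonneg.mpr hv) hμ hμm hμm' hsum
    have : 0 ≤ δ ^ r * exp (-m * (t - u)) * exp (-m' * (s - v)) := by positivity
    nlinarith [rpow_nonneg (abs_nonneg (u - v)) r]
  · rw [indicator_of_notMem (fun h => hnear (mem_Iio.mp h)), mul_zero, add_zero]
    calc _ ≤ exp (-m * (t - u)) * exp (-m' * (s - v)) * δ ^ r :=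
          mul_le_mul_of_nonneg_left (rpow_le_rpow_of_nonpos hδ (not_lt.mp hnear) hr)
            (by positivity)
      _ = _ := by ring

theorem integral_exp_mul_exp_mul_abs_rpow_le {u : ℝ} (hr : -1 < r) (hr0 : r ≤ 0) (hm' : 0 < m')
    (hδ : 0 < δ) (hμ : 0 ≤ μ) (hμm : μ ≤ m) (hμm' : μ ≤ m') (hts : 2 * δ ≤ |t - s|)
    (hu : u ≤ t) (hs : 0 ≤ s) :
    ∫ v in (0:ℝ)..s, exp (-m * (t - u)) * exp (-m' * (s - v)) * |u - v| ^ r ≤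
      δ ^ r / m' * exp (-m * (t - u)) +
        2 * (δ ^ (r + 1) / (r + 1)) * exp (-(μ * δ / 2)) * exp (-(μ / 2) * (t - u)) := by
  have hA : 0 ≤ δ ^ r * exp (-m * (t - u)) := by positivity
  have hB : 0 ≤ exp (-(μ * δ / 2)) * exp (-(μ / 2) * (t - u)) := by positivity
  set A := δ ^ r * exp (-m * (t - u))
  set B := exp (-(μ * δ / 2)) * exp (-(μ / 2) * (t - u))
  have hind : Integrable fun v => (Iio δ).indicator (· ^ r) |u - v| :=
    (integrable_indicator_abs_rpow hr hδ).comp_sub_left u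
  have hnear : ∫ v in (0:ℝ)..s, (Iio δ).indicator (· ^ r) |u - v| ≤ 2 * (δ ^ (r + 1) / (r + 1)) :=
    calc _ ≤ ∫ v, (Iio δ).indicator (· ^ r) |u - v| := by
          rw [integral_of_le hs]
          exact setIntegral_le_integral hind
            (Filter.Eventually.of_forall fun v => indicator_abs_rpow_nonneg δ r (u - v))
      _ = 2 * (δ ^ (r + 1) / (r + 1)) := by
          rw [integral_sub_left_eq_self (fun x => (Iio δ).indicator (· ^ r) |x|),
            integral_indicator_abs_rpow hr hδ.le]
  have hfar : IntervalIntegrable (fun v => A * exp (-m' * (s - v))) volume 0 s :=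
    (by fun_prop : Continuous _).intervalIntegrable _ _
  calc _ ≤ ∫ v in (0:ℝ)..s, (A * exp (-m' * (s - v)) + B * (Iio δ).indicator (· ^ r) |u - v|) :=
        intervalIntegral_mono_of_nonneg hs (fun v _ => by positivity)
          (fun _ hv => exp_mul_exp_mul_abs_rpow_le hr0 hδ hμ hμm hμm' hts hu hv.2)
          (hfar.add (hind.intervalIntegrable.const_mul B))
    _ = (A * ∫ v in (0:ℝ)..s, exp (-m' * (s - v))) +
          B * ∫ v in (0:ℝ)..s, (Iio δ).indicator (· ^ r) |u - v| := by
        rw [integral_add hfar (hind.intervalIntegrable.const_mul B),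
          intervalIntegral.integral_const_mul, intervalIntegral.integral_const_mul]
    _ ≤ A * (1 / m') + B * (2 * (δ ^ (r + 1) / (r + 1))) :=
        add_le_add (mul_le_mul_of_nonneg_left (integral_exp_neg_mul_sub_le hm' hs) hA)
          (mul_le_mul_of_nonneg_left hnear hB)
    _ = _ := by ring

theorem integral_integral_exp_mul_exp_mul_abs_rpow_le (hr : -1 < r) (hr0 : r ≤ 0) (hm : 0 < m)
    (hm' : 0 < m') (hδ : 0 < δ) (hμ : 0 < μ) (hμm : μ ≤ m) (hμm' : μ ≤ m')
    (hts : 2 * δ ≤ |t - s|) (ht : 0 ≤ t) (hs : 0 ≤ s) :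
    ∫ u in (0:ℝ)..t, ∫ v in (0:ℝ)..s, exp (-m * (t - u)) * exp (-m' * (s - v)) * |u - v| ^ r ≤
      (1 / (m * m') + 8 / (μ ^ 2 * (r + 1))) * δ ^ r := by
  have hr1 : 0 < r + 1 := by linarith
  set C := 2 * (δ ^ (r + 1) / (r + 1)) * exp (-(μ * δ / 2)) with hC
  have hdecay : δ * exp (-(μ * δ / 2)) ≤ 2 / μ := by
    have := (mul_exp_neg_le_exp_neg_one (μ * δ / 2)).trans (exp_le_one_iff.mpr (by norm_num))
    rw [le_div_iff₀ hμ]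
    linarith
  calc _ ≤ ∫ u in (0:ℝ)..t,
        (δ ^ r / m' * exp (-m * (t - u)) + C * exp (-(μ / 2) * (t - u))) :=
        intervalIntegral_mono_of_nonneg ht
          (fun u _ => integral_nonneg hs fun v _ => by positivity)
          (fun _ hu => integral_exp_mul_exp_mul_abs_rpow_le hr hr0 hm' hδ hμ.le hμm hμm' hts
            hu.2 hs)
          ((by fun_prop : Continuous _).intervalIntegrable _ _)
    _ = (δ ^ r / m' * ∫ u in (0:ℝ)..t, exp (-m * (t - u))) +
          C * ∫ u in (0:ℝ)..t, exp (-(μ / 2) * (t - u)) := by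
        rw [intervalIntegral.integral_add ((by fun_prop : Continuous _).intervalIntegrable _ _)
          ((by fun_prop : Continuous _).intervalIntegrable _ _),
          intervalIntegral.integral_const_mul, intervalIntegral.integral_const_mul]
    _ ≤ δ ^ r / m' * (1 / m) + C * (1 / (μ / 2)) :=
        add_le_add
          (mul_le_mul_of_nonneg_left (integral_exp_neg_mul_sub_le hm ht) (by positivity))
          (mul_le_mul_of_nonneg_left (integral_exp_neg_mul_sub_le (by positivity) ht)
            (by positivity))
    _ = δ ^ r / (m * m') + 4 * δ ^ r / (μ * (r + 1)) * (δ * exp (-(μ * δ / 2))) := by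
        rw [hC, rpow_add_one hδ.ne']
        field_simp
        ring
    _ ≤ δ ^ r / (m * m') + 4 * δ ^ r / (μ * (r + 1)) * (2 / μ) := by gcongr
    _ = _ := by
        field_simp
        ring

end ExpKernel

theorem crossCov_nonneg {H m m' t s : ℝ} (hH : 1 / 2 ≤ H) (ht : 0 ≤ t) (hs : 0 ≤ s) :
    0 ≤ crossCov H m m' t s :=
  mul_nonneg (by nlinarith) <|
    integral_nonneg ht fun _ _ => integral_nonneg hs fun _ _ => by positivity

theorem stmt_13 (H m m' : ℝ) (hH : H ∈ Set.Ioo (1/2 : ℝ) 1) (hm : 0 < m) (hm' : 0 < m') :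
    ∃ c : ℝ, 0 ≤ c ∧ ∀ t s : ℝ, 1 ≤ t → 1 ≤ s → t ≠ s → 1 ≤ |t - s| →
      0 ≤ crossCov H m m' t s ∧ crossCov H m m' t s ≤ c * |t - s| ^ (2*H - 2) := by
  obtain ⟨hH1, hH2⟩ := hH
  have hHn : 0 ≤ H * (2 * H - 1) := by nlinarith
  have hr1 : 0 < 2 * H - 2 + 1 := by linarith
  set K := 1 / (m * m') + 8 / (min m m' ^ 2 * (2 * H - 2 + 1))
  have hK : 0 ≤ K := by positivity
  refine ⟨H * (2 * H - 1) * (K * 2), by positivity, fun t s ht hs hne _ =>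
    ⟨crossCov_nonneg hH1.le (by linarith) (by linarith), ?_⟩⟩
  have hτ : 0 < |t - s| := abs_pos.mpr (sub_ne_zero.mpr hne)
  calc crossCov H m m' t s ≤ H * (2 * H - 1) * (K * (|t - s| / 2) ^ (2 * H - 2)) :=
        mul_le_mul_of_nonneg_left
          (integral_integral_exp_mul_exp_mul_abs_rpow_le (by linarith) (by linarith) hm hm'
            (half_pos hτ) (lt_min hm hm') (min_le_left m m') (min_le_right m m') (by linarith)
            (by linarith) (by linarith)) hHn
    _ ≤ H * (2 * H - 1) * (K * (2 * |t - s| ^ (2 * H - 2))) := by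
        gcongr
        exact div_two_rpow_le hτ.le (by linarith)
    _ = _ := by ring
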